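/- arXiv:1910.14331 — 4 statements merged into one kernel-verified Lean document; each statement's English description precedes it below -/
import Mathlib

section
/- Let F be an asymmetric norm on ℝⁿ, v ∈ ℝⁿ nonzero, r_M = max_{‖y‖=1} F(y), r_m = min_{‖y‖=1} F(y), and ε ∈ (0, r_m‖v‖/(4n r_M)]. Then for every w in the closed Euclidean ball B[v, ε] and every t > 0, F(w + t·v/‖v‖) − F(w) > (r_m/8)·t. -/
/-- Growth rate of an asymmetric norm `F` on ℝⁿ in an almost-radial direction: if
`v ≠ 0`, `r_M`, `r_m` are the max and min of `F` on the Euclidean unit sphere, and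
`ε ∈ (0, r_m‖v‖/(4n r_M)]`, then for every `w ∈ B[v,ε]` and every `t > 0`,
`F(w + t·v/‖v‖) − F(w) > (r_m/8)·t`. -/
theorem asymmetric_norm_radial_growth {n : ℕ}
    (F : EuclideanSpace ℝ (Fin n) → ℝ)
    (hnn : ∀ y, 0 ≤ F y) (hzero : ∀ y, F y = 0 → y = 0)
    (hhom : ∀ (μ : ℝ) y, 0 ≤ μ → F (μ • y) = μ * F y)
    (hsub : ∀ y z, F (y + z) ≤ F y + F z)
    (rM rm : ℝ)
    (hrM : IsGreatest (F '' Metric.sphere (0 : EuclideanSpace ℝ (Fin n)) 1) rM)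
    (hrm : IsLeast (F '' Metric.sphere (0 : EuclideanSpace ℝ (Fin n)) 1) rm)
    (v : EuclideanSpace ℝ (Fin n)) (hv : v ≠ 0)
    (ε : ℝ) (hε : ε ∈ Set.Ioc 0 (rm * ‖v‖ / (4 * n * rM)))
    (w : EuclideanSpace ℝ (Fin n)) (hw : w ∈ Metric.closedBall v ε)
    (t : ℝ) (ht : 0 < t) :
    rm / 8 * t < F (w + t • (‖v‖⁻¹ • v)) - F w := by
  obtain ⟨hε0, hεle⟩ := hε
  have hvnorm : 0 < ‖v‖ := norm_pos_iff.mpr hv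
  -- rm > 0
  obtain ⟨y, hy, hFy⟩ := hrm.1
  have hy1 : ‖y‖ = 1 := by simpa [mem_sphere_zero_iff_norm] using hy
  have hrm_pos : 0 < rm := by
    rcases lt_or_eq_of_le (hnn y) with h | h
    · rw [← hFy]; exact h
    · exfalso
      have hy0 : y = 0 := hzero y h.symm
      rw [hy0] at hy1
      simp at hy1
  have hrMrm : rm ≤ rM := hrm.2 hrM.1
  have hrM_pos : 0 < rM := lt_of_lt_of_le hrm_pos hrMrm
  -- n ≥ 1
  have hn : 1 ≤ (n : ℝ) := by
    rcases Nat.eq_zero_or_pos n with h0 | h1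
    · exfalso
      subst h0
      exact hv (Subsingleton.elim v 0)
    · exact_mod_cast h1
  -- lower and upper bounds for F
  have hF0 : F 0 = 0 := by
    have := hhom 0 0 le_rfl
    simpa using this
  have hscale : ∀ x : EuclideanSpace ℝ (Fin n), x ≠ 0 →
      F x = ‖x‖ * F (‖x‖⁻¹ • x) := by
    intro x hx
    have hxn : 0 < ‖x‖ := norm_pos_iff.mpr hx
    have := hhom ‖x‖ (‖x‖⁻¹ • x) hxn.le
    rw [smul_smul, mul_inv_cancel₀ hxn.ne', one_smul] at this
    exact this
  have hmemunit : ∀ x : EuclideanSpace ℝ (Fin n), x ≠ 0 →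
      (‖x‖⁻¹ • x) ∈ Metric.sphere (0 : EuclideanSpace ℝ (Fin n)) 1 := by
    intro x hx
    have hxn : 0 < ‖x‖ := norm_pos_iff.mpr hx
    simp [mem_sphere_zero_iff_norm, norm_smul, abs_of_pos (inv_pos.mpr hxn),
      inv_mul_cancel₀ hxn.ne']
  have hlow : ∀ x : EuclideanSpace ℝ (Fin n), rm * ‖x‖ ≤ F x := by
    intro x
    rcases eq_or_ne x 0 with rfl | hx
    · simp [hF0]
    · have hxn : 0 < ‖x‖ := norm_pos_iff.mpr hx
      have h1 : rm ≤ F (‖x‖⁻¹ • x) := hrm.2 ⟨_, hmemunit x hx, rfl⟩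
      rw [hscale x hx]
      nlinarith
  have hup : ∀ x : EuclideanSpace ℝ (Fin n), F x ≤ rM * ‖x‖ := by
    intro x
    rcases eq_or_ne x 0 with rfl | hx
    · simp [hF0]
    · have hxn : 0 < ‖x‖ := norm_pos_iff.mpr hx
      have h1 : F (‖x‖⁻¹ • x) ≤ rM := hrM.2 ⟨_, hmemunit x hx, rfl⟩
      rw [hscale x hx]
      nlinarith
  -- main computation
  set l := t / ‖v‖ with hl
  have hlpos : 0 < l := div_pos ht hvnorm
  have htv : t • (‖v‖⁻¹ • v) = l • v := by
    rw [smul_smul, hl, div_eq_mul_inv]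
  have key : (1 + l) • w = (w + t • (‖v‖⁻¹ • v)) + l • (w - v) := by
    rw [htv]; module
  have e1 : F ((1 + l) • w) = (1 + l) * F w := hhom _ _ (by positivity)
  have e2 : F (l • (w - v)) = l * F (w - v) := hhom _ _ hlpos.le
  have e3 : F ((1 + l) • w) ≤ F (w + t • (‖v‖⁻¹ • v)) + F (l • (w - v)) := by
    rw [key]; exact hsub _ _
  have hwv : ‖w - v‖ ≤ ε := by
    rw [Metric.mem_closedBall, dist_eq_norm] at hw
    exact hw
  have e4 : F (w - v) ≤ rM * ε :=
    le_trans (hup _) (mul_le_mul_of_nonneg_left hwv hrM_pos.le)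
  have hwnorm : ‖v‖ - ε ≤ ‖w‖ := by
    have := norm_sub_norm_le v w
    have h2 : ‖v - w‖ = ‖w - v‖ := norm_sub_rev v w
    linarith
  have e5 : rm * (‖v‖ - ε) ≤ F w :=
    le_trans (mul_le_mul_of_nonneg_left hwnorm hrm_pos.le) (hlow w)
  have hdiff : l * (rm * (‖v‖ - ε) - rM * ε) ≤ F (w + t • (‖v‖⁻¹ • v)) - F w := by
    nlinarith [mul_le_mul_of_nonneg_left e4 hlpos.le,
      mul_le_mul_of_nonneg_left e5 hlpos.le]
  -- arithmetic with the ε bound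
  have h4n : (0:ℝ) < 4 * n * rM := by positivity
  have h1 : ε * (4 * n * rM) ≤ rm * ‖v‖ := (le_div_iff₀ h4n).mp hεle
  have hcore : rm / 8 * ‖v‖ < rm * (‖v‖ - ε) - rM * ε := by
    nlinarith [mul_pos hrM_pos hε0, mul_nonneg (mul_nonneg hrM_pos.le hε0.le) (sub_nonneg.mpr hn)]
  have hlv : l * ‖v‖ = t := div_mul_cancel₀ t hvnorm.ne'
  have : rm / 8 * t < l * (rm * (‖v‖ - ε) - rM * ε) := by
    have := mul_lt_mul_of_pos_left hcore hlpos
    calc rm / 8 * t = l * (rm / 8 * ‖v‖) := by rw [← hlv]; ring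
    _ < l * (rm * (‖v‖ - ε) - rM * ε) := this
  linarith
end

section
/- Let F : ℝⁿ → ℝ be an asymmetric norm that is smooth on ℝⁿ \ {0}. If for some (equivalently every) y ≠ 0 and a supporting hyperplane description, the sphere S_F[0,r] = F^{−1}(r) is locally a graph of a function ψ : ℝ^{n−1} → ℝ with ψ(0)=0, dψ₀ = 0, and Hess ψ(0) positive definite (over a totally geodesic hyperplane of ℝⁿ), then F is a Minkowski norm, i.e. the Hessian of F²/2 is positive definite at every nonzero point. -/
open Filter Topology Set

lemma aux_chain {E : Type*} [NormedAddCommGroup E] [NormedSpace ℝ E]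
    {f : E → ℝ} {γ dγ : ℝ → E} {γ'' : E} {s : Set E}
    (hs : IsOpen s) (hy : γ 0 ∈ s) (hf : ContDiffOn ℝ (⊤ : ℕ∞) f s)
    (hdγ : ∀ᶠ x in 𝓝 (0:ℝ), HasDerivAt γ (dγ x) x)
    (hdd : HasDerivAt dγ γ'' 0) :
    deriv (deriv (fun x => f (γ x))) 0
      = fderiv ℝ (fderiv ℝ f) (γ 0) (dγ 0) (dγ 0) + fderiv ℝ f (γ 0) γ'' := by
  have hγ0 : HasDerivAt γ (dγ 0) 0 := hdγ.self_of_nhds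
  have hmem : ∀ᶠ x in 𝓝 (0:ℝ), γ x ∈ s :=
    hγ0.continuousAt.eventually_mem (hs.mem_nhds hy)
  have hev : deriv (fun x => f (γ x)) =ᶠ[𝓝 0] fun x => fderiv ℝ f (γ x) (dγ x) := by
    filter_upwards [hmem, hdγ] with x hxs hxd
    exact (((hf.contDiffAt (hs.mem_nhds hxs)).differentiableAt
      (by simp)).hasFDerivAt.comp_hasDerivAt x hxd).deriv
  have hf' : ContDiffOn ℝ (⊤ : ℕ∞) (fderiv ℝ f) s := hf.fderiv_of_isOpen hs (by simp)
  have hc : HasDerivAt (fun x => fderiv ℝ f (γ x)) (fderiv ℝ (fderiv ℝ f) (γ 0) (dγ 0)) 0 :=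
    ((hf'.contDiffAt (hs.mem_nhds hy)).differentiableAt
      (by simp)).hasFDerivAt.comp_hasDerivAt 0 hγ0
  rw [hev.deriv_eq]
  exact (hc.clm_apply hdd).deriv

lemma aux_mono {u : ℝ → ℝ} {I : Set ℝ} (hI : I ∈ 𝓝 (0:ℝ))
    (hm : MonotoneOn u I) {u' : ℝ} (hd : HasDerivAt u u' 0) : 0 ≤ u' := by
  have h1 : Tendsto (slope u 0) (𝓝[>] 0) (𝓝 u') :=
    (hasDerivAt_iff_tendsto_slope.1 hd).mono_left
      (nhdsWithin_mono _ fun x hx => by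
        simpa using (ne_of_gt (α := ℝ) hx))
  refine ge_of_tendsto h1 ?_
  filter_upwards [self_mem_nhdsWithin, mem_nhdsWithin_of_mem_nhds hI] with x hx hxI
  rw [slope_def_field]
  have h0I : (0:ℝ) ∈ I := mem_of_mem_nhds hI
  have : u 0 ≤ u x := hm h0I hxI (le_of_lt hx)
  have hx0 : (0:ℝ) < x := hx
  apply div_nonneg <;> simp [this, sub_nonneg, le_of_lt hx0]

set_option maxHeartbeats 1600000 in
/-- Let `F : ℝⁿ → ℝ` be an asymmetric norm, smooth away from the origin. Suppose that
at every nonzero point `y` the sphere `S_F[0, F(y)] = F⁻¹(F(y))` is, in adapted Euclidean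
coordinates centered at `y` (given by a linear isometry `e : ℝ^{n-1} × ℝ ≃ ℝⁿ`), locally
the graph of a function `ψ` with `ψ(0) = 0`, `dψ₀ = 0` and `Hess ψ(0)` positive definite.
Then `F` is a Minkowski norm: the Hessian of `F²/2` is positive definite at every
nonzero point. -/
theorem graph_posdef_implies_minkowski {n : ℕ}
    (F : EuclideanSpace ℝ (Fin (n + 1)) → ℝ)
    (hnn : ∀ y, 0 ≤ F y) (hzero : ∀ y, F y = 0 → y = 0)
    (hhom : ∀ (μ : ℝ) y, 0 ≤ μ → F (μ • y) = μ * F y)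
    (hsub : ∀ y z, F (y + z) ≤ F y + F z)
    (hsm : ContDiffOn ℝ (⊤ : ℕ∞) F {(0 : EuclideanSpace ℝ (Fin (n + 1)))}ᶜ)
    (hgraph : ∀ y : EuclideanSpace ℝ (Fin (n + 1)), y ≠ 0 →
      ∃ (e : (EuclideanSpace ℝ (Fin n) × ℝ) ≃ₗᵢ[ℝ] EuclideanSpace ℝ (Fin (n + 1)))
        (ψ : EuclideanSpace ℝ (Fin n) → ℝ) (Uψ : Set (EuclideanSpace ℝ (Fin n)))
        (W : Set (EuclideanSpace ℝ (Fin (n + 1)))),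
        IsOpen Uψ ∧ (0 : EuclideanSpace ℝ (Fin n)) ∈ Uψ ∧ IsOpen W ∧ y ∈ W ∧
        ContDiffOn ℝ (⊤ : ℕ∞) ψ Uψ ∧ ψ 0 = 0 ∧ fderiv ℝ ψ 0 = 0 ∧
        (∀ u ∈ Uψ, F (y + e (u, ψ u)) = F y) ∧
        (∀ z ∈ W, F z = F y → ∃ u ∈ Uψ, z = y + e (u, ψ u)) ∧
        (∀ u : EuclideanSpace ℝ (Fin n), u ≠ 0 →
          0 < (iteratedFDeriv ℝ 2 ψ 0) ![u, u])) :
    ∀ y : EuclideanSpace ℝ (Fin (n + 1)), y ≠ 0 →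
      ∀ ξ : EuclideanSpace ℝ (Fin (n + 1)), ξ ≠ 0 →
        0 < (iteratedFDeriv ℝ 2 (fun z => F z ^ 2 / 2) y) ![ξ, ξ] := by
  intro y hy ξ hξ
  set f : EuclideanSpace ℝ (Fin (n + 1)) → ℝ := fun z => F z ^ 2 / 2 with hf_def
  have hfsm : ContDiffOn ℝ (⊤ : ℕ∞) f {(0 : EuclideanSpace ℝ (Fin (n + 1)))}ᶜ :=
    (hsm.pow 2).div_const 2
  have hyc : y ∈ ({(0 : EuclideanSpace ℝ (Fin (n + 1)))}ᶜ :
      Set (EuclideanSpace ℝ (Fin (n + 1)))) := hy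
  have hr : 0 < F y := (hnn y).lt_of_ne (fun h => hy (hzero y h.symm))
  obtain ⟨e, ψ, Uψ, W, hUo, hU0, hWo, hyW, hψsm, hψ0, hdψ0, hFg, -, hHψ⟩ := hgraph y hy
  have hdiff : DifferentiableAt ℝ f y :=
    (hfsm.contDiffAt (isOpen_compl_singleton.mem_nhds hyc)).differentiableAt (by simp)
  have heD : ∀ {φ : ℝ → EuclideanSpace ℝ (Fin n) × ℝ}
      {p : EuclideanSpace ℝ (Fin n) × ℝ} {s₀ : ℝ}, HasDerivAt φ p s₀ →
      HasDerivAt (fun s => e (φ s)) (e p) s₀ := by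
    intro φ p s₀ h
    have := (e.toContinuousLinearEquiv.toContinuousLinearMap.hasFDerivAt
      (x := φ s₀)).comp_hasDerivAt s₀ h
    exact this
  -- Step A : L y = (F y) ^ 2
  have hstepA : fderiv ℝ f y y = F y ^ 2 := by
    have h1 : HasDerivAt (fun s : ℝ => (1 + s) • y) y 0 := by
      simpa using ((hasDerivAt_id (0:ℝ)).const_add 1).smul_const y
    have h2 : HasDerivAt (fun s : ℝ => f ((1 + s) • y)) (fderiv ℝ f y y) 0 :=
      hdiff.hasFDerivAt.comp_hasDerivAt_of_eq 0 h1 (by norm_num)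
    have h3 : (fun s : ℝ => f ((1 + s) • y)) =ᶠ[𝓝 0]
        fun s => (1 + s) ^ 2 * (F y ^ 2 / 2) := by
      filter_upwards [eventually_gt_nhds (show (-1:ℝ) < 0 by norm_num)] with s hs
      have h0 : (0:ℝ) ≤ 1 + s := by linarith
      simp only [hf_def, hhom (1 + s) y h0]
      ring
    have h4 : HasDerivAt (fun s : ℝ => (1 + s) ^ 2 * (F y ^ 2 / 2)) (F y ^ 2) 0 := by
      have := (((hasDerivAt_id (0:ℝ)).const_add 1).pow 2).mul_const (F y ^ 2 / 2)
      refine this.congr_deriv ?_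
      simp; ring
    exact h2.unique (h4.congr_of_eventuallyEq h3)
  -- Step B : L (e (v, 0)) = 0
  have hUev : ∀ v : EuclideanSpace ℝ (Fin n), ∀ᶠ s : ℝ in 𝓝 0, s • v ∈ Uψ := by
    intro v
    have hc : ContinuousAt (fun s : ℝ => s • v) 0 :=
      (continuous_id.smul continuous_const).continuousAt
    exact hc.eventually_mem (by simpa using hUo.mem_nhds hU0)
  have hψdOn : ∀ u ∈ Uψ, DifferentiableAt ℝ ψ u := fun u hu =>
    (hψsm.contDiffAt (hUo.mem_nhds hu)).differentiableAt (by simp)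
  have hlincurve : ∀ (v : EuclideanSpace ℝ (Fin n)) (s : ℝ),
      HasDerivAt (fun u : ℝ => u • v) v s := by
    intro v s
    simpa using (hasDerivAt_id s).smul_const v
  have hχd : ∀ (v : EuclideanSpace ℝ (Fin n)) (s : ℝ), s • v ∈ Uψ →
      HasDerivAt (fun u : ℝ => ψ (u • v)) (fderiv ℝ ψ (s • v) v) s := by
    intro v s hs
    have := (hψdOn _ hs).hasFDerivAt.comp_hasDerivAt_of_eq s (hlincurve v s) rfl
    exact this
  have hcd : ∀ (v : EuclideanSpace ℝ (Fin n)) (s : ℝ), s • v ∈ Uψ →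
      HasDerivAt (fun u : ℝ => y + e (u • v, ψ (u • v)))
        (e (v, fderiv ℝ ψ (s • v) v)) s := by
    intro v s hs
    exact (heD ((hlincurve v s).prodMk (hχd v s hs))).const_add y
  have hc0 : ∀ v : EuclideanSpace ℝ (Fin n),
      y = (fun u : ℝ => y + e (u • v, ψ (u • v))) 0 := by
    intro v
    simp [hψ0, Prod.mk_zero_zero]
  have hstepB : ∀ v : EuclideanSpace ℝ (Fin n), fderiv ℝ f y (e (v, 0)) = 0 := by
    intro v
    have hc : HasDerivAt (fun u : ℝ => y + e (u • v, ψ (u • v))) (e (v, 0)) 0 := by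
      have := hcd v 0 (by simpa using hU0)
      simpa [hdψ0] using this
    have h5 : HasDerivAt (fun s : ℝ => f (y + e (s • v, ψ (s • v))))
        (fderiv ℝ f y (e (v, 0))) 0 :=
      hdiff.hasFDerivAt.comp_hasDerivAt_of_eq 0 hc (hc0 v)
    have h6 : (fun s : ℝ => f (y + e (s • v, ψ (s • v)))) =ᶠ[𝓝 0]
        fun _ => F y ^ 2 / 2 := by
      filter_upwards [hUev v] with s hs
      simp only [hf_def, hFg _ hs]
    exact h5.unique ((hasDerivAt_const (0:ℝ) (F y ^ 2 / 2)).congr_of_eventuallyEq h6)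
  -- scaling in the last coordinate
  have hsc : ∀ q : ℝ, fderiv ℝ f y (e (0, q)) = q * fderiv ℝ f y (e (0, 1)) := by
    intro q
    have h : ((0 : EuclideanSpace ℝ (Fin n)), q)
        = q • ((0 : EuclideanSpace ℝ (Fin n)), (1:ℝ)) := by simp
    rw [h, e.map_smul, (fderiv ℝ f y).map_smul, smul_eq_mul]
  
  -- Step C : master identity
  have hmaster : ∀ (t : ℝ) (v : EuclideanSpace ℝ (Fin n)),
      fderiv ℝ (fderiv ℝ f) y (t • y + e (v, 0)) (t • y + e (v, 0))
        = t ^ 2 * F y ^ 2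
          - iteratedFDeriv ℝ 2 ψ 0 ![v, v] * fderiv ℝ f y (e (0, 1)) := by
    intro t v
    have hscal : ∀ s : ℝ, HasDerivAt (fun u : ℝ => 1 + t * u) t s := by
      intro s; simpa using ((hasDerivAt_id s).const_mul t).const_add 1
    -- second derivative of s ↦ fderiv ψ (s•v) v at 0
    have hfψ : ContDiffOn ℝ (⊤ : ℕ∞) (fderiv ℝ ψ) Uψ := hψsm.fderiv_of_isOpen hUo (by simp)
    have hfψd : DifferentiableAt ℝ (fderiv ℝ ψ) 0 :=
      (hfψ.contDiffAt (hUo.mem_nhds hU0)).differentiableAt (by simp)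
    have hχ'' : HasDerivAt (fun s : ℝ => fderiv ℝ ψ (s • v) v)
        (iteratedFDeriv ℝ 2 ψ 0 ![v, v]) 0 := by
      have h2 : HasDerivAt (fun s : ℝ => fderiv ℝ ψ (s • v))
          (fderiv ℝ (fderiv ℝ ψ) 0 v) 0 :=
        hfψd.hasFDerivAt.comp_hasDerivAt_of_eq 0 (hlincurve v 0) (by simp)
      have h3 := h2.clm_apply (hasDerivAt_const (0:ℝ) v)
      rw [iteratedFDeriv_two_apply]
      simpa using h3
    have hw : HasDerivAt (fun s : ℝ => e (v, fderiv ℝ ψ (s • v) v))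
        (e (0, iteratedFDeriv ℝ 2 ψ 0 ![v, v])) 0 :=
      heD ((hasDerivAt_const (0:ℝ) v).prodMk hχ'')
    have hcd0 : HasDerivAt (fun u : ℝ => y + e (u • v, ψ (u • v))) (e (v, 0)) 0 := by
      have := hcd v 0 (by simpa using hU0)
      simpa [hdψ0] using this
    have part1 : HasDerivAt (fun s : ℝ => t • (y + e (s • v, ψ (s • v))))
        (t • e (v, 0)) 0 := hcd0.const_smul t
    have part2 := (hscal 0).smul hw
    have hddV : HasDerivAt
        (fun s : ℝ => (1 + t * s) • e (v, fderiv ℝ ψ (s • v) v)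
          + t • (y + e (s • v, ψ (s • v))))
        ((2 * t) • e (v, 0) + e (0, iteratedFDeriv ℝ 2 ψ 0 ![v, v])) 0 := by
      have h := part2.add part1
      refine h.congr_deriv ?_
      simp [hdψ0]
      module
    have hmem0 : (fun u : ℝ => (1 + t * u) • (y + e (u • v, ψ (u • v)))) 0 ∈
        ({(0 : EuclideanSpace ℝ (Fin (n+1)))}ᶜ :
          Set (EuclideanSpace ℝ (Fin (n+1)))) := by
      simpa [hψ0, Prod.mk_zero_zero] using hyc
    have hch := aux_chain (f := f)
      (γ := fun u : ℝ => (1 + t * u) • (y + e (u • v, ψ (u • v))))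
      (dγ := fun s : ℝ => (1 + t * s) • e (v, fderiv ℝ ψ (s • v) v)
          + t • (y + e (s • v, ψ (s • v))))
      isOpen_compl_singleton hmem0 hfsm
      (by filter_upwards [hUev v] with s hs using (hscal s).smul (hcd v s hs)) hddV
    beta_reduce at hch
    simp only [mul_zero, add_zero, zero_smul, hψ0, hdψ0, Prod.mk_zero_zero,
      map_zero, one_smul, ContinuousLinearMap.zero_apply] at hch
    rw [show e (v, (0:ℝ)) + t • y = t • y + e (v, 0) from add_comm _ _] at hch
    -- the left-hand side
    have hpos : ∀ᶠ s : ℝ in 𝓝 0, 0 < 1 + t * s := by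
      have hcont : ContinuousAt (fun s : ℝ => 1 + t * s) 0 :=
        (continuous_const.add (continuous_const.mul continuous_id)).continuousAt
      have := hcont.eventually_mem (show Ioi (0:ℝ) ∈ 𝓝 ((fun s : ℝ => 1 + t * s) 0) by
        simpa using Ioi_mem_nhds (zero_lt_one' ℝ))
      simpa using this
    have hev : (fun s : ℝ => f ((1 + t * s) • (y + e (s • v, ψ (s • v))))) =ᶠ[𝓝 0]
        fun s => (1 + t * s) ^ 2 * (F y ^ 2 / 2) := by
      filter_upwards [hUev v, hpos] with s hs hp
      simp only [hf_def]
      rw [hhom _ _ (le_of_lt hp), hFg _ hs]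
      ring
    have hder1 : ∀ s : ℝ, HasDerivAt (fun u : ℝ => (1 + t * u) ^ 2 * (F y ^ 2 / 2))
        (2 * (1 + t * s) * t * (F y ^ 2 / 2)) s := by
      intro s
      have := ((hscal s).pow 2).mul_const (F y ^ 2 / 2)
      refine this.congr_deriv ?_
      simp
    have heq1 : deriv (fun u : ℝ => (1 + t * u) ^ 2 * (F y ^ 2 / 2))
        = fun s => 2 * (1 + t * s) * t * (F y ^ 2 / 2) := funext fun s => (hder1 s).deriv
    have hder2 : HasDerivAt (fun s : ℝ => 2 * (1 + t * s) * t * (F y ^ 2 / 2))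
        (t ^ 2 * F y ^ 2) 0 := by
      have := (((hscal 0).const_mul 2).mul_const t).mul_const (F y ^ 2 / 2)
      refine this.congr_deriv ?_
      ring
    have hLHS : deriv (deriv (fun s : ℝ => f ((1 + t * s) • (y + e (s • v, ψ (s • v)))))) 0
        = t ^ 2 * F y ^ 2 := by
      rw [hev.deriv.deriv_eq, heq1]
      exact hder2.deriv
    rw [hLHS] at hch
    have hLV : fderiv ℝ f y ((2 * t) • e (v, 0) + e (0, iteratedFDeriv ℝ 2 ψ 0 ![v, v]))
        = iteratedFDeriv ℝ 2 ψ 0 ![v, v] * fderiv ℝ f y (e (0, 1)) := by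
      rw [map_add, map_smul, hstepB v, hsc]
      simp
    rw [hLV] at hch
    linarith
  -- Step D : positive semidefiniteness from convexity
  have hfcvx : ConvexOn ℝ univ f := by
    refine ⟨convex_univ, fun x _ z _ a b ha hb hab => ?_⟩
    have h1 := hsub (a • x) (b • z)
    rw [hhom a x ha, hhom b z hb] at h1
    have h2 := hnn (a • x + b • z)
    have h3 := hnn x
    have h4 := hnn z
    simp only [hf_def, smul_eq_mul]
    nlinarith [mul_nonneg (sub_nonneg.2 h1)
        (add_nonneg h2 (add_nonneg (mul_nonneg ha h3) (mul_nonneg hb h4))),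
      mul_nonneg (mul_nonneg ha hb) (sq_nonneg (F x - F z))]
  have hnonneg : ∀ w : EuclideanSpace ℝ (Fin (n + 1)),
      0 ≤ fderiv ℝ (fderiv ℝ f) y w w := by
    intro w
    have hdw : ∀ s : ℝ, HasDerivAt (fun u : ℝ => y + u • w) w s := fun s => by
      simpa using ((hasDerivAt_id s).smul_const w).const_add y
    have hmemw : (fun u : ℝ => y + u • w) 0 ∈
        ({(0 : EuclideanSpace ℝ (Fin (n+1)))}ᶜ :
          Set (EuclideanSpace ℝ (Fin (n+1)))) := by
      simpa using hyc
    have hch := aux_chain (f := f) (γ := fun u : ℝ => y + u • w) (dγ := fun _ => w)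
      isOpen_compl_singleton hmemw hfsm
      (Eventually.of_forall hdw) (hasDerivAt_const (0:ℝ) w)
    beta_reduce at hch
    have hch' : deriv (deriv (fun x : ℝ => f (y + x • w))) 0
        = fderiv ℝ (fderiv ℝ f) y w w := by
      rw [hch]
      simp
    rw [← hch']
    -- openness of the set where the line avoids the origin
    have hcontline : Continuous (fun s : ℝ => y + s • w) :=
      continuous_const.add (continuous_id.smul continuous_const)
    have hAo : IsOpen ((fun s : ℝ => y + s • w) ⁻¹' {(0 : EuclideanSpace ℝ (Fin (n+1)))}ᶜ) :=
      isOpen_compl_singleton.preimage hcontline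
    have h0A : (0:ℝ) ∈ (fun s : ℝ => y + s • w) ⁻¹' {(0 : EuclideanSpace ℝ (Fin (n+1)))}ᶜ := by
      simpa using hy
    obtain ⟨ε, hε, hball⟩ := Metric.isOpen_iff.1 hAo 0 h0A
    have hball' : Ioo (-ε) ε ⊆ (fun s : ℝ => y + s • w) ⁻¹' {(0 : EuclideanSpace ℝ (Fin (n+1)))}ᶜ := by
      rw [Real.ball_eq_Ioo, zero_sub, zero_add] at hball
      exact hball
    -- convexity of the restriction
    have hgc : ConvexOn ℝ (Ioo (-ε) ε) (fun x : ℝ => f (y + x • w)) := by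
      have h1 := hfcvx.comp_affineMap (AffineMap.lineMap y (y + w) : ℝ →ᵃ[ℝ] _)
      have h2 : (f ∘ (AffineMap.lineMap y (y + w) : ℝ →ᵃ[ℝ] _))
          = fun x : ℝ => f (y + x • w) := by
        funext s
        show f (AffineMap.lineMap y (y + w) s) = f (y + s • w)
        rw [AffineMap.lineMap_apply_module]
        congr 1
        module
      rw [h2] at h1
      exact h1.subset (fun x _ => by simp) (convex_Ioo _ _)
    have hgd : ∀ x ∈ Ioo (-ε) ε, DifferentiableAt ℝ (fun x : ℝ => f (y + x • w)) x := by
      intro x hx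
      have hne : y + x • w ∈ ({(0 : EuclideanSpace ℝ (Fin (n+1)))}ᶜ :
          Set (EuclideanSpace ℝ (Fin (n+1)))) := hball' hx
      exact (((hfsm.contDiffAt (isOpen_compl_singleton.mem_nhds hne)).differentiableAt
        (by simp)).hasFDerivAt.comp_hasDerivAt x (hdw x)).differentiableAt
    have hmono := hgc.monotoneOn_deriv hgd
    have hγsm : ContDiff ℝ (⊤ : ℕ∞) (fun s : ℝ => y + s • w) :=
      contDiff_const.add (contDiff_id.smul contDiff_const)
    have hgsm : ContDiffOn ℝ (⊤ : ℕ∞) (fun x : ℝ => f (y + x • w))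
        ((fun s : ℝ => y + s • w) ⁻¹' {(0 : EuclideanSpace ℝ (Fin (n+1)))}ᶜ) :=
      hfsm.comp hγsm.contDiffOn (fun x hx => hx)
    have hgdd : HasDerivAt (deriv (fun x : ℝ => f (y + x • w)))
        (deriv (deriv (fun x : ℝ => f (y + x • w))) 0) 0 :=
      (((hgsm.deriv_of_isOpen hAo (m := (⊤ : ℕ∞)) (by simp)).contDiffAt
        (hAo.mem_nhds h0A)).differentiableAt (by simp)).hasDerivAt
    exact aux_mono (Ioo_mem_nhds (by linarith) hε) hmono hgdd
  -- Step E : the coefficient and the decomposition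
  have hby : e ((e.symm y).1, 0) + e (0, (e.symm y).2) = y := by
    rw [← map_add]
    have h : ((e.symm y).1, (0:ℝ)) + ((0 : EuclideanSpace ℝ (Fin n)), (e.symm y).2)
        = e.symm y := by
      rw [Prod.mk_add_mk, add_zero, zero_add]
    rw [h, e.apply_symm_apply]
  have hb : (e.symm y).2 * fderiv ℝ f y (e (0, 1)) = F y ^ 2 := by
    calc (e.symm y).2 * fderiv ℝ f y (e (0, 1))
        = fderiv ℝ f y (e ((e.symm y).1, 0)) + fderiv ℝ f y (e (0, (e.symm y).2)) := by
          rw [hstepB, hsc ((e.symm y).2)]; ring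
      _ = fderiv ℝ f y (e ((e.symm y).1, 0) + e (0, (e.symm y).2)) := (map_add _ _ _).symm
      _ = F y ^ 2 := by rw [hby, hstepA]
  have hb2 : (e.symm y).2 ≠ 0 := by
    intro h
    rw [h, zero_mul] at hb
    exact (pow_pos hr 2).ne' hb.symm
  set t : ℝ := (e.symm ξ).2 / (e.symm y).2 with ht_def
  set v : EuclideanSpace ℝ (Fin n) := (e.symm ξ).1 - t • (e.symm y).1 with hv_def
  have hdecomp : ξ = t • y + e (v, 0) := by
    have hsymm : e.symm (t • y + e (v, 0)) = e.symm ξ := by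
      rw [map_add, map_smul, e.symm_apply_apply]
      rw [Prod.ext_iff]
      constructor
      · show t • (e.symm y).1 + v = (e.symm ξ).1
        rw [hv_def]
        module
      · show t * (e.symm y).2 + 0 = (e.symm ξ).2
        rw [add_zero, ht_def, div_mul_cancel₀ _ hb2]
    calc ξ = e (e.symm ξ) := (e.apply_symm_apply ξ).symm
      _ = e (e.symm (t • y + e (v, 0))) := by rw [hsymm]
      _ = t • y + e (v, 0) := e.apply_symm_apply _
  -- conclusion
  rw [iteratedFDeriv_two_apply]
  simp only [Matrix.cons_val_zero, Matrix.cons_val_one, Matrix.head_cons]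
  rw [hdecomp, hmaster t v]
  by_cases hv : v = 0
  · have hq : iteratedFDeriv ℝ 2 ψ 0 ![v, v] = 0 := by
      rw [hv]
      exact (iteratedFDeriv ℝ 2 ψ 0).map_coord_zero 0 (by simp)
    rw [hq]
    have ht : t ≠ 0 := by
      intro h
      apply hξ
      rw [hdecomp, h, hv]
      simp [Prod.mk_zero_zero]
    have h1 : 0 < t ^ 2 := pow_two_pos_of_ne_zero ht
    have h2 : 0 < F y ^ 2 := pow_pos hr 2
    nlinarith
  · have hq := hHψ v hv
    have h0' : 0 ≤ fderiv ℝ (fderiv ℝ f) y ((0:ℝ) • y + e (v, 0)) ((0:ℝ) • y + e (v, 0)) := by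
      simpa using hnonneg (e (v, 0))
    rw [hmaster 0 v] at h0'
    have hκle : fderiv ℝ f y (e (0, 1)) ≤ 0 := by nlinarith
    have hκne : fderiv ℝ f y (e (0, 1)) ≠ 0 := by
      intro h
      rw [h, mul_zero] at hb
      exact (pow_pos hr 2).ne' hb.symm
    have hκ : fderiv ℝ f y (e (0, 1)) < 0 := lt_of_le_of_ne hκle hκne
    nlinarith [sq_nonneg t, pow_pos hr 2, mul_pos hq (neg_pos.2 hκ)]
end

section
/- Let F be a smooth-off-zero asymmetric norm on ℝⁿ. Then F is a Minkowski norm if and only if all principal curvatures κ₁,…,κ_{n−1} of the unit sphere S_F[0,1] (as a hypersurface embedded in Euclidean ℝⁿ, oriented by the inward normal) are strictly positive. -/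
open Filter Topology

namespace MinkowskiAux

variable {n : ℕ} {F : EuclideanSpace ℝ (Fin n) → ℝ}

/-- The derivative of a positively 1-homogeneous function is 0-homogeneous. -/
theorem fderiv_homog
    (hhom : ∀ (μ : ℝ) y, 0 ≤ μ → F (μ • y) = μ * F y)
    (hdiff : ∀ y : EuclideanSpace ℝ (Fin n), y ≠ 0 → DifferentiableAt ℝ F y)
    {c : ℝ} (hc : 0 < c) {y : EuclideanSpace ℝ (Fin n)} (hy : y ≠ 0) :
    fderiv ℝ F (c • y) = fderiv ℝ F y := by
  have hcy : c • y ≠ 0 := smul_ne_zero hc.ne' hy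
  have hs : HasFDerivAt (fun z : EuclideanSpace ℝ (Fin n) => c • z)
      (c • ContinuousLinearMap.id ℝ (EuclideanSpace ℝ (Fin n))) y := by
    exact (hasFDerivAt_id y).const_smul c
  have h1 : HasFDerivAt (fun z => F (c • z))
      ((fderiv ℝ F (c • y)).comp (c • ContinuousLinearMap.id ℝ (EuclideanSpace ℝ (Fin n)))) y :=
    ((hdiff _ hcy).hasFDerivAt).comp y hs
  have h2 : HasFDerivAt (fun z => c * F z) (c • fderiv ℝ F y) y :=
    ((hdiff y hy).hasFDerivAt).const_mul c
  have heq : (fun z => F (c • z)) = fun z => c * F z := funext fun z => hhom c z hc.le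
  rw [heq] at h1
  have huniq := h1.unique h2
  ext w
  have h3 := congrArg (fun L : EuclideanSpace ℝ (Fin n) →L[ℝ] ℝ => L w) huniq
  simp only [ContinuousLinearMap.comp_apply, ContinuousLinearMap.smul_apply,
    ContinuousLinearMap.id_apply, smul_eq_mul, map_smul] at h3
  have := mul_left_cancel₀ hc.ne' h3
  simpa using this

/-- Euler's identity. -/
theorem euler
    (hhom : ∀ (μ : ℝ) y, 0 ≤ μ → F (μ • y) = μ * F y)
    (hdiff : ∀ y : EuclideanSpace ℝ (Fin n), y ≠ 0 → DifferentiableAt ℝ F y)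
    {y : EuclideanSpace ℝ (Fin n)} (hy : y ≠ 0) :
    fderiv ℝ F y y = F y := by
  have hs : HasDerivAt (fun t : ℝ => t • y) y 1 := by
    simpa using (hasDerivAt_id (1 : ℝ)).smul_const y
  have h1 : HasDerivAt (fun t : ℝ => F (t • y)) (fderiv ℝ F y y) 1 := by
    have hF : HasFDerivAt F (fderiv ℝ F y) ((1:ℝ) • y) := by
      rw [one_smul]; exact (hdiff y hy).hasFDerivAt
    have := hF.comp_hasDerivAt (x := (1:ℝ)) hs
    exact this
  have h2 : HasDerivAt (fun t : ℝ => t * F y) (F y) 1 := by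
    simpa using (hasDerivAt_id (1 : ℝ)).mul_const (F y)
  have heq : (fun t : ℝ => F (t • y)) =ᶠ[𝓝 (1:ℝ)] fun t => t * F y := by
    filter_upwards [eventually_gt_nhds one_pos] with t ht
    exact hhom t y ht.le
  exact (h1.congr_of_eventuallyEq heq.symm |>.unique h2)

/-- The radial direction is in the kernel of the Hessian of a 1-homogeneous function. -/
theorem radial_hess
    (hhom : ∀ (μ : ℝ) y, 0 ≤ μ → F (μ • y) = μ * F y)
    (hdiff : ∀ y : EuclideanSpace ℝ (Fin n), y ≠ 0 → DifferentiableAt ℝ F y)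
    (hdiff' : ∀ y : EuclideanSpace ℝ (Fin n), y ≠ 0 → DifferentiableAt ℝ (fderiv ℝ F) y)
    {y : EuclideanSpace ℝ (Fin n)} (hy : y ≠ 0) :
    fderiv ℝ (fderiv ℝ F) y y = 0 := by
  have hs : HasDerivAt (fun t : ℝ => t • y) y 1 := by
    simpa using (hasDerivAt_id (1 : ℝ)).smul_const y
  have hF : HasFDerivAt (fderiv ℝ F) (fderiv ℝ (fderiv ℝ F) y) ((1:ℝ) • y) := by
    rw [one_smul]; exact (hdiff' y hy).hasFDerivAt
  have h1 : HasDerivAt (fun t : ℝ => fderiv ℝ F (t • y)) (fderiv ℝ (fderiv ℝ F) y y) 1 :=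
    hF.comp_hasDerivAt 1 hs
  have heq : (fun t : ℝ => fderiv ℝ F (t • y)) =ᶠ[𝓝 (1:ℝ)]
      fun _ => fderiv ℝ F y := by
    filter_upwards [eventually_gt_nhds one_pos] with t ht
    exact fderiv_homog hhom hdiff ht hy
  have h2 : HasDerivAt (fun _ : ℝ => fderiv ℝ F y)
      (fderiv ℝ (fderiv ℝ F) y y) 1 := h1.congr_of_eventuallyEq heq.symm
  exact h2.unique (hasDerivAt_const _ _)

/-- Scaling of the Hessian of a 1-homogeneous function. -/
theorem hess_homog
    (hhom : ∀ (μ : ℝ) y, 0 ≤ μ → F (μ • y) = μ * F y)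
    (hdiff : ∀ y : EuclideanSpace ℝ (Fin n), y ≠ 0 → DifferentiableAt ℝ F y)
    (hdiff' : ∀ y : EuclideanSpace ℝ (Fin n), y ≠ 0 → DifferentiableAt ℝ (fderiv ℝ F) y)
    {c : ℝ} (hc : 0 < c) {y : EuclideanSpace ℝ (Fin n)} (hy : y ≠ 0)
    (w : EuclideanSpace ℝ (Fin n)) :
    fderiv ℝ (fderiv ℝ F) (c • y) w = c⁻¹ • fderiv ℝ (fderiv ℝ F) y w := by
  have hcy : c • y ≠ 0 := smul_ne_zero hc.ne' hy
  have hs : HasFDerivAt (fun z : EuclideanSpace ℝ (Fin n) => c • z)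
      (c • ContinuousLinearMap.id ℝ (EuclideanSpace ℝ (Fin n))) y := by
    exact (hasFDerivAt_id y).const_smul c
  have h1 : HasFDerivAt (fun z => fderiv ℝ F (c • z))
      ((fderiv ℝ (fderiv ℝ F) (c • y)).comp
        (c • ContinuousLinearMap.id ℝ (EuclideanSpace ℝ (Fin n)))) y :=
    ((hdiff' _ hcy).hasFDerivAt).comp y hs
  have heq : (fun z => fderiv ℝ F (c • z)) =ᶠ[𝓝 y] fderiv ℝ F := by
    filter_upwards [isOpen_compl_singleton.mem_nhds hy] with z hz
    exact fderiv_homog hhom hdiff hc hz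
  have h2 : HasFDerivAt (fderiv ℝ F)
      ((fderiv ℝ (fderiv ℝ F) (c • y)).comp
        (c • ContinuousLinearMap.id ℝ (EuclideanSpace ℝ (Fin n)))) y :=
    h1.congr_of_eventuallyEq heq.symm
  have huniq := h2.unique (hdiff' y hy).hasFDerivAt
  have h3 := congrArg (fun L : EuclideanSpace ℝ (Fin n) →L[ℝ]
      (EuclideanSpace ℝ (Fin n) →L[ℝ] ℝ) => L w) huniq
  simp only [ContinuousLinearMap.comp_apply, ContinuousLinearMap.smul_apply,
    ContinuousLinearMap.id_apply, map_smul] at h3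
  rw [← h3, smul_smul, inv_mul_cancel₀ hc.ne', one_smul]

/-- The key identity relating the Hessians of `F²/2` and of `F`. -/
theorem key_identity
    (hdiff : ∀ y : EuclideanSpace ℝ (Fin n), y ≠ 0 → DifferentiableAt ℝ F y)
    (hdiff' : ∀ y : EuclideanSpace ℝ (Fin n), y ≠ 0 → DifferentiableAt ℝ (fderiv ℝ F) y)
    {y : EuclideanSpace ℝ (Fin n)} (hy : y ≠ 0) (ξ : EuclideanSpace ℝ (Fin n)) :
    (iteratedFDeriv ℝ 2 (fun z => F z ^ 2 / 2) y) ![ξ, ξ]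
      = (fderiv ℝ F y ξ) ^ 2 + F y * (fderiv ℝ (fderiv ℝ F) y ξ ξ) := by
  rw [iteratedFDeriv_two_apply]
  have hfG : ∀ z : EuclideanSpace ℝ (Fin n), z ≠ 0 →
      HasFDerivAt (fun z => F z ^ 2 / 2) (F z • fderiv ℝ F z) z := by
    intro z hz
    have h := (((hdiff z hz).hasFDerivAt.mul (hdiff z hz).hasFDerivAt)).const_mul (2⁻¹ : ℝ)
    have e1 : (fun z => F z ^ 2 / 2) = fun z => (2⁻¹ : ℝ) * (F z * F z) := by
      funext u; ring
    rw [e1]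
    refine h.congr_fderiv ?_
    ext w
    simp only [ContinuousLinearMap.smul_apply, ContinuousLinearMap.add_apply, smul_eq_mul]
    ring
  have heq : fderiv ℝ (fun z => F z ^ 2 / 2) =ᶠ[𝓝 y] fun z => F z • fderiv ℝ F z := by
    filter_upwards [isOpen_compl_singleton.mem_nhds hy] with z hz
    exact (hfG z hz).fderiv
  rw [heq.fderiv_eq]
  have h2 : HasFDerivAt (fun z => F z • fderiv ℝ F z)
      (F y • fderiv ℝ (fderiv ℝ F) y + (fderiv ℝ F y).smulRight (fderiv ℝ F y)) y :=
    (hdiff y hy).hasFDerivAt.smul (hdiff' y hy).hasFDerivAt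
  rw [h2.fderiv]
  simp only [ContinuousLinearMap.add_apply, ContinuousLinearMap.smul_apply,
    ContinuousLinearMap.smulRight_apply, smul_eq_mul, Matrix.cons_val_zero,
    Matrix.cons_val_one, Matrix.head_cons]
  ring

end MinkowskiAux

/-- Let `F` be an asymmetric norm on ℝⁿ, smooth away from the origin. Then `F` is a
Minkowski norm (the Hessian of `F²/2` is positive definite at every nonzero point) if and
only if all principal curvatures of the unit sphere `S_F[0,1] = F⁻¹(1)`, as a hypersurface
of Euclidean ℝⁿ oriented by the inward normal, are strictly positive.

The positivity of all principal curvatures with respect to the inward normal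
`ν = −∇F/‖∇F‖` is expressed equivalently through the second fundamental form
`II(v,v) = Hess F(v,v)/‖∇F‖`: it says that `Hess F(y)(v,v) > 0` for every nonzero
vector `v` tangent to the sphere at `y`, i.e. with `dF_y(v) = 0`. -/
theorem minkowski_iff_principal_curvatures_pos {n : ℕ}
    (F : EuclideanSpace ℝ (Fin n) → ℝ)
    (hnn : ∀ y, 0 ≤ F y) (hzero : ∀ y, F y = 0 → y = 0)
    (hhom : ∀ (μ : ℝ) y, 0 ≤ μ → F (μ • y) = μ * F y)
    (hsub : ∀ y z, F (y + z) ≤ F y + F z)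
    (hsm : ContDiffOn ℝ (⊤ : ℕ∞) F {(0 : EuclideanSpace ℝ (Fin n))}ᶜ) :
    (∀ y : EuclideanSpace ℝ (Fin n), y ≠ 0 →
        ∀ ξ : EuclideanSpace ℝ (Fin n), ξ ≠ 0 →
          0 < (iteratedFDeriv ℝ 2 (fun z => F z ^ 2 / 2) y) ![ξ, ξ])
    ↔ (∀ y : EuclideanSpace ℝ (Fin n), F y = 1 →
        ∀ v : EuclideanSpace ℝ (Fin n), v ≠ 0 → fderiv ℝ F y v = 0 →
          0 < (iteratedFDeriv ℝ 2 F y) ![v, v]) := by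
  open MinkowskiAux in
  have hCD : ∀ y : EuclideanSpace ℝ (Fin n), y ≠ 0 → ContDiffAt ℝ (⊤ : ℕ∞) F y := fun y hy =>
    hsm.contDiffAt (isOpen_compl_singleton.mem_nhds hy)
  have hdiff : ∀ y : EuclideanSpace ℝ (Fin n), y ≠ 0 → DifferentiableAt ℝ F y := fun y hy =>
    (hCD y hy).differentiableAt (by simp)
  have hdiff' : ∀ y : EuclideanSpace ℝ (Fin n), y ≠ 0 →
      DifferentiableAt ℝ (fderiv ℝ F) y := fun y hy =>
    ((hCD y hy).fderiv_right (m := 1) (WithTop.coe_le_coe.mpr le_top)).differentiableAt one_ne_zero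
  have hF0 : F 0 = 0 := by
    have := hhom 0 0 le_rfl; simpa using this
  have hFpos : ∀ y : EuclideanSpace ℝ (Fin n), y ≠ 0 → 0 < F y := fun y hy =>
    (hnn y).lt_of_ne fun h => hy (hzero y h.symm)
  have hsymm : ∀ y : EuclideanSpace ℝ (Fin n), y ≠ 0 → ∀ v w,
      fderiv ℝ (fderiv ℝ F) y v w = fderiv ℝ (fderiv ℝ F) y w v := fun y hy =>
    (hCD y hy).isSymmSndFDerivAt (by rw [minSmoothness_of_isRCLikeNormedField]; exact WithTop.coe_le_coe.mpr le_top)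
  constructor
  · intro hMink y hy1 v hv hvt
    have hy : y ≠ 0 := fun h => by simp [h, hF0] at hy1
    have h := hMink y hy v hv
    rw [MinkowskiAux.key_identity hdiff hdiff' hy v, hvt, hy1] at h
    rw [iteratedFDeriv_two_apply]
    simpa using h
  · intro hCurv y hy ξ hξ
    have hrpos : 0 < F y := hFpos y hy
    set r := F y with hr
    set y' : EuclideanSpace ℝ (Fin n) := r⁻¹ • y with hy'def
    have hy' : y' ≠ 0 := smul_ne_zero (inv_ne_zero hrpos.ne') hy
    have hFy' : F y' = 1 := by
      rw [hy'def, hhom _ _ (inv_nonneg.2 hrpos.le), ← hr, inv_mul_cancel₀ hrpos.ne']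
    have hdf : fderiv ℝ F y' = fderiv ℝ F y :=
      MinkowskiAux.fderiv_homog hhom hdiff (inv_pos.2 hrpos) hy
    have hHs : ∀ w, fderiv ℝ (fderiv ℝ F) y' w = r • fderiv ℝ (fderiv ℝ F) y w := by
      intro w
      rw [hy'def, MinkowskiAux.hess_homog hhom hdiff hdiff' (inv_pos.2 hrpos) hy w, inv_inv]
    rw [MinkowskiAux.key_identity hdiff hdiff' hy ξ]
    set a := fderiv ℝ F y ξ with ha
    set v : EuclideanSpace ℝ (Fin n) := ξ - a • y' with hvdef
    have hξv : ξ = v + a • y' := by rw [hvdef, sub_add_cancel]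
    have hdfy' : fderiv ℝ F y' y' = 1 := by
      rw [MinkowskiAux.euler hhom hdiff hy', hFy']
    have hdv : fderiv ℝ F y v = 0 := by
      rw [hvdef, map_sub, map_smul, ← ha, ← hdf, hdfy']
      simp
    have hrad : fderiv ℝ (fderiv ℝ F) y' y' = 0 :=
      MinkowskiAux.radial_hess hhom hdiff hdiff' hy'
    have hcross : fderiv ℝ (fderiv ℝ F) y' v y' = 0 := by
      rw [hsymm y' hy' v y', hrad, ContinuousLinearMap.zero_apply]
    have hexp : fderiv ℝ (fderiv ℝ F) y' ξ ξ = fderiv ℝ (fderiv ℝ F) y' v v := by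
      have h1 : fderiv ℝ (fderiv ℝ F) y' ξ = fderiv ℝ (fderiv ℝ F) y' v := by
        rw [hξv, map_add, map_smul, hrad, smul_zero, add_zero]
      rw [h1]
      conv_lhs => rw [hξv]
      rw [map_add, map_smul, hcross, smul_zero, add_zero]
    have hHyy : r * (fderiv ℝ (fderiv ℝ F) y ξ ξ) = fderiv ℝ (fderiv ℝ F) y' ξ ξ := by
      rw [hHs ξ]; simp
    rw [← hr, hHyy, hexp]
    by_cases hv0 : v = 0
    · have hane : a ≠ 0 := by
        intro h0
        apply hξ
        rw [hξv, hv0, h0, zero_smul, add_zero]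
      rw [hv0]
      simp only [map_zero, ContinuousLinearMap.zero_apply, add_zero]
      positivity
    · have hpos := hCurv y' hFy' v hv0 (by rw [hdf]; exact hdv)
      rw [iteratedFDeriv_two_apply] at hpos
      simp only [Matrix.cons_val_zero, Matrix.cons_val_one, Matrix.head_cons] at hpos
      nlinarith [sq_nonneg a]
end

section
/- Let (M,F) be a C⁰-Finsler manifold, U a coordinate open set with compact closure inside a chart domain, and ζ_ε = (1−u(ε))η_ε + u(ε)η_{2r_U/r_u} with u increasing, u(ε) → 0. For ε sufficiently small, the vertical convolution (ζ_ε ∗_v F)(x,y) = ∫ ζ_ε(z) F(x, y−z) dz satisfies (ζ_ε ∗_v F)(x,y) < r_U whenever ‖y‖ ≤ 1/2 and (ζ_ε ∗_v F)(x,y) > r_U whenever ‖y‖ ≥ 2r_U/r_u. -/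
open MeasureTheory Real

/-- The standard mollifier on ℝⁿ. -/
noncomputable def eta {n : ℕ} (C : ℝ) (x : EuclideanSpace ℝ (Fin n)) : ℝ :=
  if ‖x‖ < 1 then C * Real.exp (1 / (‖x‖ ^ 2 - 1)) else 0

/-- The rescaled mollifier `η_ε(x) = ε^{-n} η(x/ε)`. -/
noncomputable def etaE {n : ℕ} (C ε : ℝ) (x : EuclideanSpace ℝ (Fin n)) : ℝ :=
  (1 / ε ^ n) * eta C (ε⁻¹ • x)

lemma eta_eq_glue {n : ℕ} (C : ℝ) (x : EuclideanSpace ℝ (Fin n)) :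
    eta C x = C * expNegInvGlue (1 - ‖x‖ ^ 2) := by
  unfold eta
  rcases lt_or_ge ‖x‖ 1 with h | h
  · rw [if_pos h, expNegInvGlue, if_neg (by nlinarith [norm_nonneg x] : ¬ (1 - ‖x‖^2 ≤ 0))]
    congr 1
    rw [one_div, neg_inv]
    congr 1
    ring
  · rw [if_neg (not_lt.mpr h), expNegInvGlue.zero_of_nonpos (by nlinarith), mul_zero]

lemma continuous_eta {n : ℕ} (C : ℝ) : Continuous (eta C : EuclideanSpace ℝ (Fin n) → ℝ) := by
  have : (eta C : EuclideanSpace ℝ (Fin n) → ℝ)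
      = fun x => C * expNegInvGlue (1 - ‖x‖ ^ 2) := funext (eta_eq_glue C)
  rw [this]
  exact continuous_const.mul (((expNegInvGlue.contDiff (n := 1)).continuous).comp (by continuity))

lemma eta_nonneg {n : ℕ} {C : ℝ} (hC : 0 ≤ C) (x : EuclideanSpace ℝ (Fin n)) :
    0 ≤ eta C x := by
  rw [eta_eq_glue]; exact mul_nonneg hC (expNegInvGlue.nonneg _)

lemma eta_zero {n : ℕ} (C : ℝ) {x : EuclideanSpace ℝ (Fin n)} (h : 1 ≤ ‖x‖) :
    eta C x = 0 := if_neg (not_lt.mpr h)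

lemma hasCompactSupport_eta {n : ℕ} (C : ℝ) :
    HasCompactSupport (eta C : EuclideanSpace ℝ (Fin n) → ℝ) :=
  HasCompactSupport.intro (isCompact_closedBall 0 1) fun x hx => by
    have h1 : 1 < ‖x‖ := by
      simpa [Metric.mem_closedBall, dist_zero_right, not_le] using hx
    exact eta_zero C h1.le

lemma integrable_eta {n : ℕ} (C : ℝ) :
    Integrable (eta C : EuclideanSpace ℝ (Fin n) → ℝ) :=
  (continuous_eta C).integrable_of_hasCompactSupport (hasCompactSupport_eta C)

lemma etaE_nonneg {n : ℕ} {C : ℝ} (hC : 0 ≤ C) (a : ℝ) (ha : 0 < a)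
    (x : EuclideanSpace ℝ (Fin n)) : 0 ≤ etaE C a x :=
  mul_nonneg (by positivity) (eta_nonneg hC _)

lemma etaE_zero {n : ℕ} (C : ℝ) {a : ℝ} (ha : 0 < a) {x : EuclideanSpace ℝ (Fin n)}
    (h : a ≤ ‖x‖) : etaE C a x = 0 := by
  unfold etaE
  rw [eta_zero, mul_zero]
  rw [norm_smul, norm_inv, Real.norm_eq_abs, abs_of_pos ha, inv_mul_eq_div,
    le_div_iff₀ ha, one_mul]
  exact h

lemma continuous_etaE {n : ℕ} (C : ℝ) (a : ℝ) :
    Continuous (etaE C a : EuclideanSpace ℝ (Fin n) → ℝ) :=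
  continuous_const.mul ((continuous_eta C).comp (continuous_const_smul _))

lemma hasCompactSupport_etaE {n : ℕ} (C : ℝ) {a : ℝ} (ha : 0 < a) :
    HasCompactSupport (etaE C a : EuclideanSpace ℝ (Fin n) → ℝ) :=
  HasCompactSupport.intro (isCompact_closedBall 0 a) fun x hx => by
    have h1 : a < ‖x‖ := by
      simpa [Metric.mem_closedBall, dist_zero_right, not_le] using hx
    exact etaE_zero C ha h1.le

lemma integrable_etaE {n : ℕ} (C : ℝ) {a : ℝ} (ha : 0 < a) :
    Integrable (etaE C a : EuclideanSpace ℝ (Fin n) → ℝ) :=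
  (continuous_etaE C a).integrable_of_hasCompactSupport (hasCompactSupport_etaE C ha)

lemma integral_etaE {n : ℕ} {C a : ℝ} (ha : 0 < a)
    (hnorm : (∫ x : EuclideanSpace ℝ (Fin n), eta C x) = 1) :
    (∫ x : EuclideanSpace ℝ (Fin n), etaE C a x) = 1 := by
  unfold etaE
  rw [integral_const_mul,
    MeasureTheory.Measure.integral_comp_inv_smul_of_nonneg volume (eta C) ha.le,
    hnorm, finrank_euclideanSpace_fin, smul_eq_mul, mul_one]
  field_simp


set_option maxHeartbeats 1000000 in
/-- Let `(M,F)` be a C⁰-Finsler manifold read in a chart: `U` open with compact closure,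
`F : TU ≅ U × ℝⁿ → ℝ` continuous with `F(x,·)` an asymmetric norm, `r_U` and `r_u` the
max and min of `F` over `cl(U) × {‖y‖=1}`, and `ζ_ε = (1−u(ε))η_ε + u(ε)η_{2r_U/r_u}`
with `ε` and `u(ε)` in `(0, r_u/(16 n r_U))`. Then the vertical convolution
`(ζ_ε ∗_v F)(x,y) = ∫ ζ_ε(z) F(x, y−z) dz` satisfies `(ζ_ε ∗_v F)(x,y) < r_U` whenever
`‖y‖ ≤ 1/2` and `(ζ_ε ∗_v F)(x,y) > r_U` whenever `‖y‖ ≥ 2r_U/r_u`. -/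
theorem vertical_convolution_sphere_bounds {n : ℕ} (C : ℝ) (hC : 0 < C)
    (hnorm : (∫ x : EuclideanSpace ℝ (Fin n), eta C x) = 1)
    (U : Set (EuclideanSpace ℝ (Fin n))) (hUo : IsOpen U)
    (hUc : IsCompact (closure U))
    (F : EuclideanSpace ℝ (Fin n) → EuclideanSpace ℝ (Fin n) → ℝ)
    (hFc : Continuous fun p : EuclideanSpace ℝ (Fin n) × EuclideanSpace ℝ (Fin n) =>
      F p.1 p.2)
    (hnn : ∀ x ∈ closure U, ∀ y, 0 ≤ F x y)
    (hzero : ∀ x ∈ closure U, ∀ y, F x y = 0 → y = 0)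
    (hhom : ∀ x ∈ closure U, ∀ (μ : ℝ) y, 0 ≤ μ → F x (μ • y) = μ * F x y)
    (hsub : ∀ x ∈ closure U, ∀ y z, F x (y + z) ≤ F x y + F x z)
    (rU ru : ℝ)
    (hrU : IsGreatest {c | ∃ x ∈ closure U, ∃ y : EuclideanSpace ℝ (Fin n),
      ‖y‖ = 1 ∧ F x y = c} rU)
    (hru : IsLeast {c | ∃ x ∈ closure U, ∃ y : EuclideanSpace ℝ (Fin n),
      ‖y‖ = 1 ∧ F x y = c} ru)
    (u : ℝ → ℝ) (ε : ℝ)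
    (hε : 0 < ε) (hε' : ε < ru / (16 * n * rU))
    (hu : 0 < u ε) (hu' : u ε < ru / (16 * n * rU)) :
    ∀ x ∈ U, ∀ y : EuclideanSpace ℝ (Fin n),
      (‖y‖ ≤ 1 / 2 →
        (∫ z, ((1 - u ε) * etaE C ε z + u ε * etaE C (2 * rU / ru) z) * F x (y - z))
          < rU) ∧
      (2 * rU / ru ≤ ‖y‖ →
        rU < ∫ z, ((1 - u ε) * etaE C ε z + u ε * etaE C (2 * rU / ru) z)
          * F x (y - z)) := by
  intro x hxU y
  have hx : x ∈ closure U := subset_closure hxU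
  -- positivity of ru, rU
  obtain ⟨x0, hx0, y0, hy0, hFy0⟩ := hru.1
  have hru0 : 0 < ru := by
    rcases lt_or_eq_of_le (hnn x0 hx0 y0) with h | h
    · rwa [hFy0] at h
    · exfalso
      have h0 := hzero x0 hx0 y0 h.symm
      rw [h0, norm_zero] at hy0
      norm_num at hy0
  have hrUru : ru ≤ rU := hrU.2 hru.1
  have hrU0 : 0 < rU := lt_of_lt_of_le hru0 hrUru
  set δ : ℝ := 2 * rU / ru with hδdef
  have hδru : δ * ru = 2 * rU := by
    rw [hδdef]; exact div_mul_cancel₀ _ hru0.ne'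
  have hδ2 : 2 ≤ δ := by
    rw [hδdef, le_div_iff₀ hru0]; nlinarith
  have hδ0 : (0:ℝ) < δ := lt_of_lt_of_le two_pos hδ2
  -- n ≥ 1
  have hn : 1 ≤ (n:ℝ) := by
    rcases Nat.eq_zero_or_pos n with h | h
    · exfalso; rw [h] at hε'; norm_num at hε'; linarith
    · exact_mod_cast h
  have hA0 : 0 < 16 * (n:ℝ) * rU := by nlinarith
  have hεA : ε * (16 * (n:ℝ) * rU) < ru := (lt_div_iff₀ hA0).mp hε'
  have huA : u ε * (16 * (n:ℝ) * rU) < ru := (lt_div_iff₀ hA0).mp hu'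
  have hε16 : ε < 1/16 := by nlinarith
  have hu16 : u ε < 1/16 := by nlinarith
  have h1u : (0:ℝ) ≤ 1 - u ε := by linarith
  have huδ : u ε * δ < 1/8 := by
    rw [hδdef, mul_div_assoc']
    rw [div_lt_iff₀ hru0]
    nlinarith
  have hs : (1 - u ε) * ε + u ε * δ < 1/2 := by nlinarith [mul_pos hu hε]
  have hs0 : 0 ≤ (1 - u ε) * ε + u ε * δ := by positivity
  -- F bounds
  have hF0 : F x 0 = 0 := by
    have h := hhom x hx 0 0 le_rfl
    simpa using h
  have hFub : ∀ w, F x w ≤ rU * ‖w‖ := by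
    intro w
    rcases eq_or_ne w 0 with rfl | hw
    · simp [hF0]
    · have hw0 : (0:ℝ) < ‖w‖ := norm_pos_iff.mpr hw
      have he : ‖(‖w‖⁻¹ • w : EuclideanSpace ℝ (Fin n))‖ = 1 := by
        rw [norm_smul, norm_inv, norm_norm, inv_mul_cancel₀ hw0.ne']
      have h1 : F x (‖w‖⁻¹ • w) ≤ rU := hrU.2 ⟨x, hx, _, he, rfl⟩
      have h2 := hhom x hx ‖w‖ (‖w‖⁻¹ • w) (norm_nonneg w)
      rw [smul_inv_smul₀ hw0.ne'] at h2
      rw [h2, mul_comm rU ‖w‖]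
      exact mul_le_mul_of_nonneg_left h1 hw0.le
  have hFlb : ∀ w, ru * ‖w‖ ≤ F x w := by
    intro w
    rcases eq_or_ne w 0 with rfl | hw
    · simp [hF0]
    · have hw0 : (0:ℝ) < ‖w‖ := norm_pos_iff.mpr hw
      have he : ‖(‖w‖⁻¹ • w : EuclideanSpace ℝ (Fin n))‖ = 1 := by
        rw [norm_smul, norm_inv, norm_norm, inv_mul_cancel₀ hw0.ne']
      have h1 : ru ≤ F x (‖w‖⁻¹ • w) := hru.2 ⟨x, hx, _, he, rfl⟩
      have h2 := hhom x hx ‖w‖ (‖w‖⁻¹ • w) (norm_nonneg w)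
      rw [smul_inv_smul₀ hw0.ne'] at h2
      rw [h2, mul_comm ru ‖w‖]
      exact mul_le_mul_of_nonneg_left h1 hw0.le
  -- integrability
  have hint : ∀ a : ℝ, 0 < a →
      Integrable (fun z : EuclideanSpace ℝ (Fin n) => etaE C a z * F x (y - z)) := by
    intro a ha
    have hcont : Continuous (fun z : EuclideanSpace ℝ (Fin n) => etaE C a z * F x (y - z)) :=
      (continuous_etaE C a).mul
        (hFc.comp (continuous_const.prodMk (continuous_const.sub continuous_id)))
    exact hcont.integrable_of_hasCompactSupport ((hasCompactSupport_etaE C ha).mul_right)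
  -- upper and lower bounds for each mollifier scale
  have hupper : ∀ a : ℝ, 0 < a →
      (∫ z, etaE C a z * F x (y - z)) ≤ rU * (‖y‖ + a) := by
    intro a ha
    have hle : ∀ z, etaE C a z * F x (y - z) ≤ rU * (‖y‖ + a) * etaE C a z := by
      intro z
      rcases le_or_gt a ‖z‖ with h | h
      · rw [etaE_zero C ha h]; simp
      · have h1 : F x (y - z) ≤ rU * (‖y‖ + a) := by
          calc F x (y - z) ≤ rU * ‖y - z‖ := hFub _
            _ ≤ rU * (‖y‖ + a) := by
                have hns := norm_sub_le y z
                nlinarith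
        calc etaE C a z * F x (y - z) ≤ etaE C a z * (rU * (‖y‖ + a)) :=
              mul_le_mul_of_nonneg_left h1 (etaE_nonneg hC.le a ha z)
          _ = rU * (‖y‖ + a) * etaE C a z := mul_comm _ _
    calc (∫ z, etaE C a z * F x (y - z)) ≤ ∫ z, rU * (‖y‖ + a) * etaE C a z :=
        integral_mono (hint a ha) ((integrable_etaE C ha).const_mul _) hle
      _ = rU * (‖y‖ + a) := by rw [integral_const_mul, integral_etaE ha hnorm, mul_one]
  have hlower : ∀ a : ℝ, 0 < a →
      ru * ‖y‖ - rU * a ≤ ∫ z, etaE C a z * F x (y - z) := by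
    intro a ha
    have hge : ∀ z, (ru * ‖y‖ - rU * a) * etaE C a z ≤ etaE C a z * F x (y - z) := by
      intro z
      rcases le_or_gt a ‖z‖ with h | h
      · rw [etaE_zero C ha h]; simp
      · have hsum := hsub x hx (y - z) z
        rw [sub_add_cancel] at hsum
        have h2 : F x z ≤ rU * a := by
          have := hFub z
          nlinarith
        have h3 : ru * ‖y‖ - rU * a ≤ F x (y - z) := by
          have := hFlb y
          linarith
        calc (ru * ‖y‖ - rU * a) * etaE C a z = etaE C a z * (ru * ‖y‖ - rU * a) :=
              mul_comm _ _
          _ ≤ etaE C a z * F x (y - z) :=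
              mul_le_mul_of_nonneg_left h3 (etaE_nonneg hC.le a ha z)
    calc ru * ‖y‖ - rU * a = ∫ z, (ru * ‖y‖ - rU * a) * etaE C a z := by
          rw [integral_const_mul, integral_etaE ha hnorm, mul_one]
      _ ≤ ∫ z, etaE C a z * F x (y - z) :=
        integral_mono ((integrable_etaE C ha).const_mul _) (hint a ha) hge
  -- splitting the integral
  have hsplit : (∫ z, ((1 - u ε) * etaE C ε z + u ε * etaE C δ z) * F x (y - z))
      = (1 - u ε) * (∫ z, etaE C ε z * F x (y - z))
        + u ε * (∫ z, etaE C δ z * F x (y - z)) := by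
    rw [← integral_const_mul, ← integral_const_mul,
      ← integral_add ((hint ε hε).const_mul _) ((hint δ hδ0).const_mul _)]
    congr 1
    funext z
    ring
  constructor
  · intro hy
    rw [hsplit]
    have h1 := mul_le_mul_of_nonneg_left (hupper ε hε) h1u
    have h2 := mul_le_mul_of_nonneg_left (hupper δ hδ0) hu.le
    have heq : (1 - u ε) * (rU * (‖y‖ + ε)) + u ε * (rU * (‖y‖ + δ))
        = rU * (‖y‖ + ((1 - u ε) * ε + u ε * δ)) := by ring
    have hfin : rU * (‖y‖ + ((1 - u ε) * ε + u ε * δ)) < rU * 1 :=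
      mul_lt_mul_of_pos_left (by linarith) hrU0
    rw [mul_one] at hfin
    linarith
  · intro hy
    rw [hsplit]
    have h1 := mul_le_mul_of_nonneg_left (hlower ε hε) h1u
    have h2 := mul_le_mul_of_nonneg_left (hlower δ hδ0) hu.le
    have heq : (1 - u ε) * (ru * ‖y‖ - rU * ε) + u ε * (ru * ‖y‖ - rU * δ)
        = ru * ‖y‖ - rU * ((1 - u ε) * ε + u ε * δ) := by ring
    have h2rU : 2 * rU ≤ ru * ‖y‖ := by
      calc 2 * rU = ru * δ := by rw [mul_comm ru δ, hδru]
        _ ≤ ru * ‖y‖ := mul_le_mul_of_nonneg_left hy hru0.le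
    have hrUs : rU * ((1 - u ε) * ε + u ε * δ) < rU * (1/2) :=
      mul_lt_mul_of_pos_left hs hrU0
    linarith
end
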